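/- arXiv:math/9805153 — 6 statements merged into one kernel-verified Lean document; each statement's English description precedes it below -/
import Mathlib

section
/- The bracket on the free F-vector space with basis {⟨a,i⟩ : a ∈ ℤ, i ∈ ℤ} defined on basis elements by [⟨a,i⟩, ⟨b,j⟩] = (g(b) - g(a))·⟨a+b, i+j⟩ + (j - i)·⟨a+b, i+j-1⟩ is antisymmetric and satisfies the Jacobi identity, hence defines a Lie algebra W(g,1). -/
/-!
Over any commutative ring, the bracket extends bilinearly from the basis values
`[⟨a,i⟩, ⟨b,j⟩]`, so antisymmetry and the Jacobi identity only need to be checked on basis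
vectors. Antisymmetry there is immediate. For Jacobi, the Jacobiator is trilinear and invariant
under cyclic permutation of its arguments, so linearity in the first argument alone reduces it to
basis triples, where it is a finite identity between multiples of `⟨a+b+c, i+j+k-t⟩`, `t ≤ 2`.
-/

/-- The bracket on the free `F`-vector space with basis `{⟨a,i⟩ : a i : ℤ}`, defined
on basis elements by `[⟨a,i⟩,⟨b,j⟩] = (g b - g a)•⟨a+b,i+j⟩ + (j-i)•⟨a+b,i+j-1⟩`. -/
noncomputable def wittBracket (F : Type*) [Field F] (g : ℤ →+ F)
    (x y : (ℤ × ℤ) →₀ F) : (ℤ × ℤ) →₀ F :=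
  x.sum fun p c => y.sum fun q d =>
    (c * d) • ((g q.1 - g p.1) • Finsupp.single (p.1 + q.1, p.2 + q.2) (1 : F)
      + ((q.2 - p.2 : ℤ) : F) • Finsupp.single (p.1 + q.1, p.2 + q.2 - 1) (1 : F))

section BilinearOnBasis

variable {ι R M N : Type*} [CommRing R] [AddCommGroup M] [Module R M] [AddCommGroup N]
  [Module R N]

theorem LinearMap.antisymm_of_basis (B : M →ₗ[R] M →ₗ[R] N) (b : Module.Basis ι R M)
    (h : ∀ i j, B (b i) (b j) = -B (b j) (b i)) (x y : M) : B x y = -B y x := by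
  have : B = -B.flip := LinearMap.ext_basis b b h
  exact congr($this x y)

def jacobiator (B : M →ₗ[R] M →ₗ[R] M) (x y z : M) : M :=
  B x (B y z) + B y (B z x) + B z (B x y)

theorem jacobiator_rotate (B : M →ₗ[R] M →ₗ[R] M) (x y z : M) :
    jacobiator B x y z = jacobiator B y z x :=
  add_rotate _ _ _

theorem jacobiator_eq_apply (B : M →ₗ[R] M →ₗ[R] M) (x y z : M) :
    jacobiator B x y z = (B.flip (B y z) + B y ∘ₗ B z + B z ∘ₗ B.flip y) x := by
  simp [jacobiator]

theorem jacobiator_eq_zero_of_basis (B : M →ₗ[R] M →ₗ[R] M) (b : Module.Basis ι R M)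
    (h : ∀ i j k, jacobiator B (b i) (b j) (b k) = 0) (x y z : M) : jacobiator B x y z = 0 := by
  have reduce : ∀ y z, (∀ i, jacobiator B (b i) y z = 0) → ∀ x, jacobiator B x y z = 0 := by
    intro y z hi x
    have : B.flip (B y z) + B y ∘ₗ B z + B z ∘ₗ B.flip y = 0 :=
      b.ext fun i => by simpa [jacobiator_eq_apply] using hi i
    rw [jacobiator_eq_apply, this, LinearMap.zero_apply]
  refine reduce y z (fun i => ?_) x
  rw [jacobiator_rotate]
  refine reduce z (b i) (fun j => ?_) y
  rw [jacobiator_rotate]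
  exact reduce (b i) (b j) (fun k => by rw [jacobiator_rotate]; exact h i j k) z

end BilinearOnBasis

namespace WittAlgebra

open Finsupp

variable {R : Type*} [CommRing R] (g : ℤ →+ R)

noncomputable def basisBracket (p q : ℤ × ℤ) : (ℤ × ℤ) →₀ R :=
  (g q.1 - g p.1) • single (p.1 + q.1, p.2 + q.2) 1
    + ((q.2 - p.2 : ℤ) : R) • single (p.1 + q.1, p.2 + q.2 - 1) 1

noncomputable def bracket : ((ℤ × ℤ) →₀ R) →ₗ[R] ((ℤ × ℤ) →₀ R) →ₗ[R] ((ℤ × ℤ) →₀ R) :=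
  linearCombination R fun p => linearCombination R (basisBracket g p)

theorem bracket_single_single (p q : ℤ × ℤ) :
    bracket g (single p 1) (single q 1) = basisBracket g p q := by
  simp [bracket]

theorem basisBracket_antisymm (p q : ℤ × ℤ) : basisBracket g p q = -basisBracket g q p := by
  simp only [basisBracket, add_comm q.1, add_comm q.2]
  module

theorem jacobiator_bracket_single (p q r : ℤ × ℤ) :
    jacobiator (bracket g) (single p 1) (single q 1) (single r 1) = 0 := by
  simp only [jacobiator, bracket_single_single, basisBracket, map_add, map_smul]
  -- normalizes the indices of the `single`s, so that `module` can collect like terms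
  ring_nf
  module

theorem bracket_antisymm (x y : (ℤ × ℤ) →₀ R) : bracket g x y = -bracket g y x :=
  (bracket g).antisymm_of_basis Finsupp.basisSingleOne
    (fun p q => by simpa [bracket_single_single] using basisBracket_antisymm g p q) x y

theorem jacobiator_bracket (x y z : (ℤ × ℤ) →₀ R) : jacobiator (bracket g) x y z = 0 :=
  jacobiator_eq_zero_of_basis _ Finsupp.basisSingleOne
    (fun p q r => by simpa using jacobiator_bracket_single g p q r) x y z

theorem bracket_apply {F : Type*} [Field F] (g : ℤ →+ F) (x y : (ℤ × ℤ) →₀ F) :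
    bracket g x y = wittBracket F g x y := by
  simp [bracket, wittBracket, linearCombination_apply, basisBracket, smul_sum, mul_smul]

end WittAlgebra

theorem wittBracket_lieRing_general (F : Type*) [Field F] (g : ℤ →+ F) :
    (∀ x y : (ℤ × ℤ) →₀ F, wittBracket F g x y = - wittBracket F g y x) ∧
    (∀ x y z : (ℤ × ℤ) →₀ F,
      wittBracket F g x (wittBracket F g y z)
        + wittBracket F g y (wittBracket F g z x)
        + wittBracket F g z (wittBracket F g x y) = 0) ∧
    (∀ x₁ x₂ y : (ℤ × ℤ) →₀ F,
      wittBracket F g (x₁ + x₂) y = wittBracket F g x₁ y + wittBracket F g x₂ y) ∧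
    (∀ (c : F) (x y : (ℤ × ℤ) →₀ F),
      wittBracket F g (c • x) y = c • wittBracket F g x y) := by
  simp only [← WittAlgebra.bracket_apply]
  exact ⟨WittAlgebra.bracket_antisymm g, WittAlgebra.jacobiator_bracket g,
    fun x₁ x₂ y => by rw [map_add, LinearMap.add_apply],
    fun c x y => by rw [map_smul, LinearMap.smul_apply]⟩

theorem wittBracket_lieRing (F : Type*) [Field F] [CharZero F] (g : ℤ →+ F) :
    (∀ x y : (ℤ × ℤ) →₀ F, wittBracket F g x y = - wittBracket F g y x) ∧
    (∀ x y z : (ℤ × ℤ) →₀ F,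
      wittBracket F g x (wittBracket F g y z)
        + wittBracket F g y (wittBracket F g z x)
        + wittBracket F g z (wittBracket F g x y) = 0) ∧
    (∀ x₁ x₂ y : (ℤ × ℤ) →₀ F,
      wittBracket F g (x₁ + x₂) y = wittBracket F g x₁ y + wittBracket F g x₂ y) ∧
    (∀ (c : F) (x y : (ℤ × ℤ) →₀ F),
      wittBracket F g (c • x) y = c • wittBracket F g x y) :=
  wittBracket_lieRing_general F g
end

section
/- If g : ℤ → F is additive and injective, then the Lie algebra W(g,1) is simple: it is nonabelian and its only ideals are 0 and W(g,1). -/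
/-!
Read `E (a, i)` as `x ^ a * t ^ i`. Then `adZeroSub g E b = ad E(0,0) - g b` acts on the column
`{E (a, ·)}` as `(g a - g b) + ∂/∂t`. Bracketing a nonzero element of an ideal with a suitable
`E (c, k)` leaves only nonnegative powers of `t`. Then a high power of `ad E(0,0) - g b` kills
column `b`, where `∂/∂t` is nilpotent, and multiplies the top coefficient of every other
column `a` by a power of `g a - g b ≠ 0`. Once one column is left, repeated differentiation
(characteristic zero) reaches a multiple of a single basis vector, and brackets of one basis
vector produce all others through
`⁅E (e-p-1, k), E (p+1, j)⁆ - ⁅E (e-p, k), E (p, j)⁆ = 2 g(1) • E (e, k+j)`.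
-/

def IsWBasis {R W : Type*} [CommRing R] [LieRing W] [LieAlgebra R W] (g : ℤ →+ R)
    (E : Module.Basis (ℤ × ℤ) R W) : Prop :=
  ∀ a i b j : ℤ, ⁅E (a, i), E (b, j)⁆ =
    (g b - g a) • E (a + b, i + j) + ((j - i : ℤ) : R) • E (a + b, i + j - 1)

section Coordinates

variable {R W : Type*} [CommRing R] [LieRing W] [LieAlgebra R W] (g : ℤ →+ R)
  (E : Module.Basis (ℤ × ℤ) R W)

noncomputable def adZeroSub (b : ℤ) (v : W) : W := ⁅E (0, 0), v⁆ - g b • v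

def NonnegDegree (v : W) : Prop := ∀ a j : ℤ, j < 0 → E.repr v (a, j) = 0

noncomputable def columns (v : W) : Finset ℤ := (E.repr v).support.image Prod.fst

def IsColumnTop (v : W) (a M : ℤ) : Prop :=
  E.repr v (a, M) ≠ 0 ∧ ∀ j, M < j → E.repr v (a, j) = 0

theorem exists_repr_eq_zero_of_lt (v : W) :
    ∃ N : ℤ, ∀ a j, N < j → E.repr v (a, j) = 0 := by
  obtain ⟨N, hN⟩ := ((E.repr v).support.image Prod.snd).bddAbove
  refine ⟨N, fun a j hj => by_contra fun h => hj.not_ge (hN ?_)⟩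
  exact Finset.mem_image_of_mem Prod.snd (Finsupp.mem_support_iff.mpr h)

theorem exists_repr_eq_zero_of_gt (v : W) :
    ∃ N : ℤ, ∀ a j, j < N → E.repr v (a, j) = 0 := by
  obtain ⟨N, hN⟩ := ((E.repr v).support.image Prod.snd).bddBelow
  refine ⟨N, fun a j hj => by_contra fun h => hj.not_ge (hN ?_)⟩
  exact Finset.mem_image_of_mem Prod.snd (Finsupp.mem_support_iff.mpr h)

theorem exists_isColumnTop {v : W} (hv : v ≠ 0) : ∃ a M, IsColumnTop E v a M := by
  obtain ⟨⟨a, j⟩, hj⟩ := Finsupp.support_nonempty_iff.mpr (E.repr.map_ne_zero_iff.mpr hv)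
  obtain ⟨N, hN⟩ := exists_repr_eq_zero_of_lt E v
  obtain ⟨M, hM, hMmax⟩ := Int.exists_greatest_of_bdd (P := fun j => E.repr v (a, j) ≠ 0)
    ⟨N, fun j hj => not_lt.mp fun h => hj (hN a j h)⟩ ⟨j, Finsupp.mem_support_iff.mp hj⟩
  exact ⟨a, M, hM, fun j hj => not_not.mp fun h => hj.not_ge (hMmax j h)⟩

variable {g E}

theorem mem_columns {v : W} {a : ℤ} : a ∈ columns E v ↔ ∃ j, E.repr v (a, j) ≠ 0 := by
  simp [columns]

theorem adZeroSub_mem (I : LieIdeal R W) (b : ℤ) {v : W} (hv : v ∈ I) :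
    adZeroSub g E b v ∈ I :=
  I.sub_mem (I.lie_mem hv) (I.smul_mem _ hv)

end Coordinates

namespace IsWBasis

section CommRing

variable {R W : Type*} [CommRing R] [LieRing W] [LieAlgebra R W] {g : ℤ →+ R}
  {E : Module.Basis (ℤ × ℤ) R W}

theorem repr_lie (hE : IsWBasis g E) (c k : ℤ) (v : W) (a m : ℤ) :
    E.repr ⁅E (c, k), v⁆ (a, m) =
      (g (a - c) - g c) * E.repr v (a - c, m - k) +
        ((m + 1 - 2 * k : ℤ) : R) * E.repr v (a - c, m + 1 - k) := by
  have hv : v ∈ Submodule.span R (Set.range E) := by rw [E.span_eq]; trivial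
  induction hv using Submodule.span_induction with
  | mem x hx =>
    obtain ⟨⟨b, j⟩, rfl⟩ := hx
    simp only [hE c k b j, map_add, map_smul, E.repr_self, Finsupp.add_apply,
      Finsupp.smul_apply, Finsupp.single_apply, smul_eq_mul, Prod.mk.injEq]
    split_ifs <;> rename_i h₁ h₂ h₃ h₄ <;>
      first
        | omega
        | (obtain ⟨rfl, rfl⟩ := h₃; push_cast; ring)
        | (obtain ⟨rfl, rfl⟩ := h₄; push_cast; ring)
        | ring
  | zero => simp
  | add x y _ _ hx hy => simp only [lie_add, map_add, Finsupp.add_apply, hx, hy]; ring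
  | smul r x _ hx => simp only [lie_smul, map_smul, Finsupp.smul_apply, hx, smul_eq_mul]; ring

theorem repr_adZeroSub (hE : IsWBasis g E) (b : ℤ) (v : W) (a m : ℤ) :
    E.repr (adZeroSub g E b v) (a, m) =
      (g a - g b) * E.repr v (a, m) + ((m + 1 : ℤ) : R) * E.repr v (a, m + 1) := by
  simp only [adZeroSub, map_sub, map_smul, Finsupp.sub_apply, Finsupp.smul_apply, smul_eq_mul,
    hE.repr_lie, sub_zero, map_zero, mul_zero]
  ring

theorem repr_adZeroSub_self (hE : IsWBasis g E) (b : ℤ) (v : W) (m : ℤ) :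
    E.repr (adZeroSub g E b v) (b, m) = ((m + 1 : ℤ) : R) * E.repr v (b, m + 1) := by
  rw [hE.repr_adZeroSub, sub_self, zero_mul, zero_add]

theorem nonnegDegree_adZeroSub (hE : IsWBasis g E) {v : W} (hv : NonnegDegree E v) (b : ℤ) :
    NonnegDegree E (adZeroSub g E b v) := by
  intro a j hj
  rw [hE.repr_adZeroSub, hv a j hj, mul_zero, zero_add]
  rcases (show j + 1 < 0 ∨ j + 1 = 0 by omega) with h | h
  · rw [hv a _ h, mul_zero]
  · rw [h, Int.cast_zero, zero_mul]

theorem columns_adZeroSub_subset (hE : IsWBasis g E) (b : ℤ) (v : W) :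
    columns E (adZeroSub g E b v) ⊆ columns E v := by
  intro a ha
  obtain ⟨j, hj⟩ := mem_columns.mp ha
  by_contra h
  simp only [mem_columns, not_exists, not_not] at h
  simp [hE.repr_adZeroSub, h] at hj

theorem repr_iterate_adZeroSub_self (hE : IsWBasis g E) {v : W} {b M : ℤ}
    (hv : ∀ j, M < j → E.repr v (b, j) = 0) (n : ℕ) :
    ∀ j, M < j + n → E.repr ((adZeroSub g E b)^[n] v) (b, j) = 0 := by
  induction n with
  | zero => simpa using hv
  | succ n ih =>
    intro j hj
    rw [Function.iterate_succ_apply', hE.repr_adZeroSub_self,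
      ih (j + 1) (by push_cast at hj; omega), mul_zero]

theorem nonnegDegree_lie (hE : IsWBasis g E) {v : W} {m₀ : ℤ}
    (hv : ∀ a j, j < m₀ → E.repr v (a, j) = 0) (c : ℤ) :
    NonnegDegree E ⁅E (c, 1 - m₀), v⁆ := by
  intro a j hj
  rw [hE.repr_lie, hv _ _ (by omega), hv _ _ (by omega), mul_zero, mul_zero, add_zero]

variable [NoZeroDivisors R]

theorem isColumnTop_lie (hE : IsWBasis g E) {v : W} {b M : ℤ} (h : IsColumnTop E v b M) {c : ℤ}
    (hc : g c ≠ g b) (k : ℤ) : IsColumnTop E ⁅E (c, k), v⁆ (c + b) (M + k) := by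
  refine ⟨?_, fun j hj => ?_⟩
  · rw [hE.repr_lie, add_sub_cancel_left, add_sub_cancel_right, h.2 (M + k + 1 - k) (by omega),
      mul_zero, add_zero]
    exact mul_ne_zero (sub_ne_zero.mpr hc.symm) h.1
  · rw [hE.repr_lie, add_sub_cancel_left, h.2 (j - k) (by omega), h.2 (j + 1 - k) (by omega),
      mul_zero, mul_zero, add_zero]

theorem isColumnTop_adZeroSub (hE : IsWBasis g E) {v : W} {a M : ℤ} (h : IsColumnTop E v a M)
    {b : ℤ} (hab : g a ≠ g b) : IsColumnTop E (adZeroSub g E b v) a M := by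
  refine ⟨?_, fun j hj => ?_⟩
  · rw [hE.repr_adZeroSub, h.2 _ (lt_add_one M), mul_zero, add_zero]
    exact mul_ne_zero (sub_ne_zero.mpr hab) h.1
  · rw [hE.repr_adZeroSub, h.2 j hj, h.2 (j + 1) (by omega), mul_zero, mul_zero, add_zero]

theorem isColumnTop_adZeroSub_self [CharZero R] (hE : IsWBasis g E) {v : W} {a : ℤ} {n : ℕ}
    (h : IsColumnTop E v a (n + 1)) : IsColumnTop E (adZeroSub g E a v) a n := by
  refine ⟨?_, fun j hj => ?_⟩
  · rw [hE.repr_adZeroSub_self]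
    exact mul_ne_zero (by exact_mod_cast n.succ_ne_zero) h.1
  · rw [hE.repr_adZeroSub_self, h.2 (j + 1) (by omega), mul_zero]

end CommRing

section Field

variable {F W : Type*} [Field F] [LieRing W] [LieAlgebra F W] {g : ℤ →+ F}
  {E : Module.Basis (ℤ × ℤ) F W}

theorem exists_nonnegDegree_isColumnTop_mem (hE : IsWBasis g E) (hg : Function.Injective g)
    (I : LieIdeal F W) {x : W} (hxI : x ∈ I) (hx : x ≠ 0) :
    ∃ y ∈ I, NonnegDegree E y ∧ ∃ a M, IsColumnTop E y a M := by
  obtain ⟨b, M, htop⟩ := exists_isColumnTop E hx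
  obtain ⟨m₀, hm₀⟩ := exists_repr_eq_zero_of_gt E x
  exact ⟨_, I.lie_mem hxI, hE.nonnegDegree_lie hm₀ (b + 1), _, _,
    hE.isColumnTop_lie htop (hg.ne (by omega)) _⟩

theorem exists_columns_subset_singleton_mem (hE : IsWBasis g E) (hg : Function.Injective g)
    (I : LieIdeal F W) {v : W} (hvI : v ∈ I) (hv : NonnegDegree E v) {a M : ℤ}
    (htop : IsColumnTop E v a M) :
    ∃ w ∈ I, NonnegDegree E w ∧ IsColumnTop E w a M ∧ columns E w ⊆ {a} := by
  induction hn : (columns E v).card using Nat.strong_induction_on generalizing v with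
  | _ n ih =>
  by_cases hcol : columns E v ⊆ {a}
  · exact ⟨v, hvI, hv, htop, hcol⟩
  obtain ⟨b, hb, hba⟩ : ∃ b ∈ columns E v, b ≠ a := by
    simpa only [Finset.not_subset, Finset.mem_singleton] using hcol
  obtain ⟨N, hN⟩ := exists_repr_eq_zero_of_lt E v
  let w := (adZeroSub g E b)^[N.toNat + 1] v
  have hw : NonnegDegree E w :=
    Function.Iterate.rec (NonnegDegree E) hv (fun u hu => hE.nonnegDegree_adZeroSub hu b) _
  have hw_col : columns E w ⊆ (columns E v).erase b := by
    intro c hc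
    refine Finset.mem_erase.mpr ⟨?_, Function.Iterate.rec (fun u => columns E u ⊆ columns E v)
      subset_rfl (fun u hu => (hE.columns_adZeroSub_subset b u).trans hu) _ hc⟩
    rintro rfl
    obtain ⟨j, hj⟩ := mem_columns.mp hc
    rcases lt_or_ge j 0 with h | h
    · exact hj (hw _ _ h)
    · exact hj (hE.repr_iterate_adZeroSub_self (hN c) _ j (by push_cast; omega))
  have hwI : w ∈ I := Function.Iterate.rec (· ∈ I) hvI (fun u hu => adZeroSub_mem I b hu) _
  have hw_top : IsColumnTop E w a M :=
    Function.Iterate.rec (IsColumnTop E · a M) htop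
      (fun u hu => hE.isColumnTop_adZeroSub hu (hg.ne hba.symm)) _
  exact ih _ (hn ▸ Finset.card_lt_card (hw_col.trans_ssubset (Finset.erase_ssubset hb)))
    hwI hw hw_top rfl

theorem exists_basis_mem_of_columns_subset_singleton [CharZero F] (hE : IsWBasis g E)
    (I : LieIdeal F W) {v : W} (hvI : v ∈ I) (hv : NonnegDegree E v) {a M : ℤ}
    (htop : IsColumnTop E v a M) (hcol : columns E v ⊆ {a}) : ∃ d i, E (d, i) ∈ I := by
  lift M to ℕ using not_lt.mp fun h => htop.1 (hv a M h)
  induction M generalizing v with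
  | zero =>
    have hrepr : E.repr v = Finsupp.single (a, 0) (E.repr v (a, 0)) := by
      ext ⟨b, j⟩
      rw [Finsupp.single_apply]
      split_ifs with h
      · rw [← h]
      · by_contra hne
        obtain rfl : b = a := Finset.mem_singleton.mp (hcol (mem_columns.mpr ⟨j, hne⟩))
        rcases lt_trichotomy j 0 with hj | rfl | hj
        · exact hne (hv _ _ hj)
        · exact h rfl
        · exact hne (htop.2 j (by exact_mod_cast hj))
    have hv_eq : v = E.repr v (a, 0) • E (a, 0) := by
      rw [← E.repr_symm_single, ← hrepr, LinearEquiv.symm_apply_apply]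
    refine ⟨a, 0, ?_⟩
    rw [hv_eq] at hvI
    have hc : E.repr v (a, 0) ≠ 0 := by exact_mod_cast htop.1
    simpa only [inv_smul_smul₀ hc, LieSubmodule.mem_toSubmodule] using
      I.smul_mem (E.repr v (a, 0))⁻¹ hvI
  | succ n ih =>
    exact ih (adZeroSub_mem I a hvI) (hE.nonnegDegree_adZeroSub hv a)
      ((hE.columns_adZeroSub_subset a v).trans hcol)
      (hE.isColumnTop_adZeroSub_self (by exact_mod_cast htop))

theorem exists_basis_mem [CharZero F] (hE : IsWBasis g E) (hg : Function.Injective g)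
    (I : LieIdeal F W) (hI : I ≠ ⊥) : ∃ d i, E (d, i) ∈ I := by
  obtain ⟨x, hxI, hx⟩ : ∃ x ∈ I, x ≠ 0 := by
    simpa [LieSubmodule.eq_bot_iff] using hI
  obtain ⟨y, hyI, hy, a, M, htop⟩ := hE.exists_nonnegDegree_isColumnTop_mem hg I hxI hx
  obtain ⟨w, hwI, hw, hwtop, hwcol⟩ := hE.exists_columns_subset_singleton_mem hg I hyI hy htop
  exact hE.exists_basis_mem_of_columns_subset_singleton I hwI hw hwtop hwcol

theorem lie_sub_lie (hE : IsWBasis g E) (e p k j : ℤ) :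
    ⁅E (e - p - 1, k), E (p + 1, j)⁆ - ⁅E (e - p, k), E (p, j)⁆ =
      (2 * g 1) • E (e, k + j) := by
  rw [hE, hE, show e - p - 1 + (p + 1) = e by ring, sub_add_cancel, add_sub_add_right_eq_sub,
    ← sub_smul]
  congr 1
  simp only [map_sub, map_add]
  ring

theorem basis_mem_of_mem (hE : IsWBasis g E) (hg : Function.Injective g) (I : LieIdeal F W)
    {d i : ℤ} (h : E (d, i) ∈ I) {e : ℤ} (he : e ≠ 2 * d) : E (e, i + i) ∈ I := by
  have hlie := I.lie_mem (x := E (e - d, i)) h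
  rw [hE, sub_add_cancel, sub_self, Int.cast_zero, zero_smul, add_zero] at hlie
  have hne : g d - g (e - d) ≠ 0 := sub_ne_zero.mpr (hg.ne (by omega))
  simpa only [inv_smul_smul₀ hne, LieSubmodule.mem_toSubmodule] using
    I.smul_mem (g d - g (e - d))⁻¹ hlie

theorem eq_top_of_basis_mem [CharZero F] (hE : IsWBasis g E) (hg : Function.Injective g)
    (I : LieIdeal F W) {d i : ℤ} (h : E (d, i) ∈ I) : I = ⊤ := by
  have hg1 : (2 * g 1 : F) ≠ 0 :=
    mul_ne_zero two_ne_zero (by simpa using hg.ne (show (1 : ℤ) ≠ 0 by norm_num))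
  have hall : ∀ e t, E (e, t) ∈ I := by
    intro e t
    have hmem := I.sub_mem
      (I.lie_mem (x := E (e - (2 * d + 1) - 1, t - (i + i)))
        (hE.basis_mem_of_mem hg I h (e := 2 * d + 1 + 1) (by omega)))
      (I.lie_mem (x := E (e - (2 * d + 1), t - (i + i)))
        (hE.basis_mem_of_mem hg I h (e := 2 * d + 1) (by omega)))
    rw [hE.lie_sub_lie, sub_add_cancel] at hmem
    simpa only [inv_smul_smul₀ hg1, LieSubmodule.mem_toSubmodule] using
      I.smul_mem (2 * g 1)⁻¹ hmem
  rw [← LieSubmodule.toSubmodule_eq_top, eq_top_iff, ← E.span_eq, Submodule.span_le]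
  rintro _ ⟨⟨e, t⟩, rfl⟩
  exact hall e t

theorem not_isLieAbelian (hE : IsWBasis g E) (hg : Function.Injective g) : ¬IsLieAbelian W := by
  intro _
  have h := hE 0 0 1 0
  simp only [trivial_lie_zero, map_zero, sub_zero, Int.cast_zero, zero_smul, add_zero,
    zero_add] at h
  rcases smul_eq_zero.mp h.symm with h1 | h1
  · exact hg.ne one_ne_zero (by rw [h1, map_zero])
  · exact E.ne_zero _ h1

end Field

end IsWBasis

theorem W_g1_simple (F : Type*) [Field F] [CharZero F] (g : ℤ →+ F)
    (hg : Function.Injective g)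
    (W : Type*) [LieRing W] [LieAlgebra F W] (E : Module.Basis (ℤ × ℤ) F W)
    (hbr : ∀ a i b j : ℤ, ⁅E (a, i), E (b, j)⁆ =
      (g b - g a) • E (a + b, i + j) + ((j - i : ℤ) : F) • E (a + b, i + j - 1)) :
    LieAlgebra.IsSimple F W := by
  have hE : IsWBasis g E := hbr
  refine ⟨fun I => ?_, hE.not_isLieAbelian hg⟩
  rcases eq_or_ne I ⊥ with hI | hI
  · exact Or.inl hI
  · obtain ⟨d, i, hdi⟩ := hE.exists_basis_mem hg I hI
    exact Or.inr (hE.eq_top_of_basis_mem hg I hdi)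
end

section
/- If a nonzero ideal I of W(g,1) (with g additive and injective) contains the element ⟨0,0⟩, then I = W(g,1). -/
/-!
Bracketing with `∂ = ⟨0,0⟩` multiplies `⟨b,0⟩` by `-g b`, so every `⟨b,0⟩` with `b ≠ 0` lies in `I`.
Then `⁅⟨a-b,i⟩, ⟨b,0⟩⁆ = g (2b-a) ⟨a,i⟩ - i ⟨a,i-1⟩`; subtracting the cases `b = 1` and `b = 2`
leaves `g (-2) ⟨a,i⟩`, whose coefficient is nonzero because `g` is injective.
-/

section

variable {F : Type*} [Field F] {W : Type*} [LieRing W] [LieAlgebra F W]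

/-- `E` is a basis of `W` with the structure constants of `W(g,1)`. -/
def IsWittBasis (g : ℤ →+ F) (E : Module.Basis (ℤ × ℤ) F W) : Prop :=
  ∀ a i b j : ℤ, ⁅E (a, i), E (b, j)⁆ =
    (g b - g a) • E (a + b, i + j) + ((j - i : ℤ) : F) • E (a + b, i + j - 1)

variable {g : ℤ →+ F} {E : Module.Basis (ℤ × ℤ) F W}

theorem IsWittBasis.lie_del (hE : IsWittBasis g E) (b : ℤ) :
    ⁅E (b, 0), E (0, 0)⁆ = -g b • E (b, 0) := by
  rw [hE]
  simp

theorem IsWittBasis.lie_deg_zero (hE : IsWittBasis g E) (a i b : ℤ) :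
    ⁅E (a - b, i), E (b, 0)⁆ = g (2 * b - a) • E (a, i) - (i : F) • E (a, i - 1) := by
  rw [hE, sub_add_cancel, add_zero, zero_sub, Int.cast_neg, neg_smul, ← sub_eq_add_neg,
    ← map_sub]
  congr 3
  ring

theorem LieIdeal.mem_of_smul_mem {L : Type*} [LieRing L] [LieAlgebra F L] (I : LieIdeal F L)
    {c : F} (hc : c ≠ 0) {x : L} (h : c • x ∈ I) : x ∈ I :=
  (Submodule.smul_mem_iff (p := I.toSubmodule) hc).mp h

variable (I : LieIdeal F W)

theorem IsWittBasis.basis_mem_of_del_mem (hE : IsWittBasis g E) (hg : Function.Injective g)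
    (hI : E (0, 0) ∈ I) {b : ℤ} (hb : b ≠ 0) : E (b, 0) ∈ I := by
  have h := I.lie_mem (x := E (b, 0)) hI
  rw [hE.lie_del] at h
  exact I.mem_of_smul_mem (neg_ne_zero.mpr ((map_ne_zero_iff g hg).mpr hb)) h

theorem IsWittBasis.basis_mem (hE : IsWittBasis g E) (hg : Function.Injective g)
    (hI : E (0, 0) ∈ I) (a i : ℤ) : E (a, i) ∈ I := by
  have lie_mem (b : ℤ) (hb : b ≠ 0) :
      g (2 * b - a) • E (a, i) - (i : F) • E (a, i - 1) ∈ I := by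
    rw [← hE.lie_deg_zero]
    exact I.lie_mem (hE.basis_mem_of_del_mem I hg hI hb)
  have h := I.sub_mem (lie_mem 1 one_ne_zero) (lie_mem 2 two_ne_zero)
  rw [sub_sub_sub_cancel_right, ← sub_smul, ← map_sub] at h
  exact I.mem_of_smul_mem ((map_ne_zero_iff g hg).mpr (by omega)) h

end

theorem ideal_containing_del_is_top_general (F : Type*) [Field F] (g : ℤ →+ F)
    (hg : Function.Injective g)
    (W : Type*) [LieRing W] [LieAlgebra F W] (E : Module.Basis (ℤ × ℤ) F W)
    (hbr : ∀ a i b j : ℤ, ⁅E (a, i), E (b, j)⁆ =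
      (g b - g a) • E (a + b, i + j) + ((j - i : ℤ) : F) • E (a + b, i + j - 1))
    (I : LieIdeal F W) (hI : E (0, 0) ∈ I) : I = ⊤ := by
  rw [← LieSubmodule.toSubmodule_eq_top, Submodule.eq_top_iff_forall_basis_mem E]
  rintro ⟨a, i⟩
  exact IsWittBasis.basis_mem I hbr hg hI a i

theorem ideal_containing_del_is_top (F : Type*) [Field F] [CharZero F] (g : ℤ →+ F)
    (hg : Function.Injective g)
    (W : Type*) [LieRing W] [LieAlgebra F W] (E : Module.Basis (ℤ × ℤ) F W)
    (hbr : ∀ a i b j : ℤ, ⁅E (a, i), E (b, j)⁆ =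
      (g b - g a) • E (a + b, i + j) + ((j - i : ℤ) : F) • E (a + b, i + j - 1))
    (I : LieIdeal F W) (hI : E (0, 0) ∈ I) : I = ⊤ :=
  ideal_containing_del_is_top_general F g hg W E hbr I hI
end

section
/- For any element c·⟨0,1⟩ (c ∈ F, c ≠ 0) of W(g,1) with g injective, and any a ∈ ℤ with a ≠ 0, the bracket [c·⟨0,1⟩, ⟨a,0⟩] = c·g(a)·⟨a,1⟩ - c·⟨a,0⟩ is not a scalar multiple of ⟨a,0⟩; hence c·⟨0,1⟩ is not ad-diagonalizable. -/
theorem Module.Basis.smul_eq_zero_of_smul_sub_eq_smul {R M ι : Type*} [Ring R]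
    [AddCommGroup M] [Module R M] (b : Module.Basis ι R M) {i j : ι} (hij : i ≠ j)
    {x y z : R} (h : x • b i - y • b j = z • b j) : x = 0 := by
  have := congrArg (fun v => b.repr v i) h
  simpa [Finsupp.single_apply, hij, hij.symm] using this

section BracketFormula

variable {F W : Type*} [CommRing F] [LieRing W] [LieAlgebra F W] (g : ℤ →+ F)
  (E : Module.Basis (ℤ × ℤ) F W)
  (hbr : ∀ a i b j : ℤ, ⁅E (a, i), E (b, j)⁆ =
    (g b - g a) • E (a + b, i + j) + ((j - i : ℤ) : F) • E (a + b, i + j - 1))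
include hbr

theorem lie_basis_zero_one_basis_zero (a : ℤ) :
    ⁅E (0, 1), E (a, 0)⁆ = g a • E (a, 1) - E (a, 0) := by
  rw [hbr 0 1 a 0]
  simp only [map_zero, sub_zero, zero_add, add_zero, zero_sub, sub_self, Int.cast_neg,
    Int.cast_one, neg_one_smul, ← sub_eq_add_neg]

theorem lie_smul_basis_zero_one_basis_zero (c : F) (a : ℤ) :
    ⁅c • E (0, 1), E (a, 0)⁆ = (c * g a) • E (a, 1) - c • E (a, 0) := by
  rw [smul_lie, lie_basis_zero_one_basis_zero g E hbr, smul_sub, smul_smul]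

end BracketFormula

theorem c_x_del_not_diagonalizable_general (F : Type*) [Field F] (g : ℤ →+ F)
    (hg : Function.Injective g)
    (W : Type*) [LieRing W] [LieAlgebra F W] (E : Module.Basis (ℤ × ℤ) F W)
    (hbr : ∀ a i b j : ℤ, ⁅E (a, i), E (b, j)⁆ =
      (g b - g a) • E (a + b, i + j) + ((j - i : ℤ) : F) • E (a + b, i + j - 1))
    (c : F) (hc : c ≠ 0) (a : ℤ) (ha : a ≠ 0) :
    ⁅c • E (0, 1), E (a, 0)⁆ = (c * g a) • E (a, 1) - c • E (a, 0) ∧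
    ¬ ∃ α : F, ⁅c • E (0, 1), E (a, 0)⁆ = α • E (a, 0) := by
  have hbracket := lie_smul_basis_zero_one_basis_zero g E hbr c a
  refine ⟨hbracket, fun ⟨α, hα⟩ => ?_⟩
  have hga : g a ≠ 0 := (map_ne_zero_iff g hg).mpr ha
  exact mul_ne_zero hc hga <|
    E.smul_eq_zero_of_smul_sub_eq_smul (by simp) (hbracket.symm.trans hα)

theorem c_x_del_not_diagonalizable (F : Type*) [Field F] [CharZero F] (g : ℤ →+ F)
    (hg : Function.Injective g)
    (W : Type*) [LieRing W] [LieAlgebra F W] (E : Module.Basis (ℤ × ℤ) F W)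
    (hbr : ∀ a i b j : ℤ, ⁅E (a, i), E (b, j)⁆ =
      (g b - g a) • E (a + b, i + j) + ((j - i : ℤ) : F) • E (a + b, i + j - 1))
    (c : F) (hc : c ≠ 0) (a : ℤ) (ha : a ≠ 0) :
    ⁅c • E (0, 1), E (a, 0)⁆ = (c * g a) • E (a, 1) - c • E (a, 0) ∧
    ¬ ∃ α : F, ⁅c • E (0, 1), E (a, 0)⁆ = α • E (a, 0) :=
  c_x_del_not_diagonalizable_general F g hg W E hbr c hc a ha
end

section
/- Let D be a derivation of W(g,1)_+ (with g injective) satisfying D(⟨0,0⟩) = 0. Then D = f·ad_{⟨0,0⟩} + S for some f ∈ F and some scalar derivation S, i.e., a derivation S with S(⟨a,i⟩) = s_{a,i}·⟨a,i⟩ for scalars s_{a,i} ∈ F. -/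
/-!
Let `T = ad ⟨0,0⟩`. The `⟨a,i⟩`-coordinate of `(T - g b) x` is
`(g a - g b) x_{a,i} + (i+1) x_{a,i+1}`. For `a ≠ b`, if these vanish for all `i` then
`x_{a,i} ≠ 0` forces `x_{a,i+1} ≠ 0`, which finite support forbids, so `x` vanishes on the block
`{⟨a,i⟩ : i ∈ ℕ}`; in particular the kernel of `T - g b` is `F ⟨b,0⟩`.

As `D ⟨0,0⟩ = 0`, `D` commutes with `T`, which forces `D ⟨0,1⟩ = f ⟨0,0⟩`. Then
`S = D - f ad ⟨0,0⟩` kills `⟨0,0⟩` and `⟨0,1⟩`, so commutes with `T` and with `ad ⟨0,1⟩`.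
Commuting with `T` makes each `⟨b,0⟩` an eigenvector of `S` and keeps `S ⟨0,j⟩` in block `0`,
where `ad ⟨0,1⟩` is diagonal with distinct eigenvalues `j - 1`. For `a ≠ 0` the relation
`g a ⟨a,i+1⟩ = [⟨0,1⟩,⟨a,i⟩] - (i-1) ⟨a,i⟩` carries the eigenvalue of `⟨a,0⟩` up the block.
-/

open Module

theorem Set.Finite.eq_empty_of_forall_add_one_mem {s : Set ℕ} (hs : s.Finite)
    (h : ∀ i ∈ s, i + 1 ∈ s) : s = ∅ := by
  obtain ⟨N, hN⟩ := hs.bddAbove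
  refine Set.eq_empty_of_forall_notMem fun i hi => ?_
  have hmem : ∀ k, i + k ∈ s := fun k => by
    induction k with
    | zero => exact hi
    | succ k ih => exact h _ ih
  have := hN (hmem (N + 1))
  omega

theorem LieDerivation.apply_lie_of_apply_eq_zero {R L : Type*} [CommRing R] [LieRing L]
    [LieAlgebra R L] (D : LieDerivation R L L) {a : L} (ha : D a = 0) (b : L) :
    D ⁅a, b⁆ = ⁅a, D b⁆ := by
  rw [D.apply_lie_eq_add, ha, zero_lie, add_zero]

section

variable {F Γ W : Type*} [Field F] [AddCommGroup Γ] [LieRing W] [LieAlgebra F W]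

-- The truncated `i + j - 1` is harmless: for `i = j = 0` its coefficient `j - i` vanishes.
def HasWittBracket (g : Γ →+ F) (E : Basis (Γ × ℕ) F W) : Prop :=
  ∀ (a : Γ) (i : ℕ) (b : Γ) (j : ℕ), ⁅E (a, i), E (b, j)⁆ =
    (g b - g a) • E (a + b, i + j) + (((j : ℤ) - (i : ℤ)) : F) • E (a + b, i + j - 1)

namespace HasWittBracket

variable {g : Γ →+ F} {E : Basis (Γ × ℕ) F W}

theorem lie_basis_zero_zero (h : HasWittBracket g E) (b : Γ) (j : ℕ) :
    ⁅E (0, 0), E (b, j)⁆ = g b • E (b, j) + (j : F) • E (b, j - 1) := by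
  simp [h 0 0 b j]

theorem lie_basis_zero_one (h : HasWittBracket g E) (b : Γ) (j : ℕ) :
    ⁅E (0, 1), E (b, j)⁆ = g b • E (b, j + 1) + ((j : F) - 1) • E (b, j) := by
  simp [h 0 1 b j, add_comm 1 j]

theorem repr_lie_basis_zero_zero (h : HasWittBracket g E) (x : W) (a : Γ) (i : ℕ) :
    E.repr ⁅E (0, 0), x⁆ (a, i) = g a * E.repr x (a, i) + (i + 1) * E.repr x (a, i + 1) := by
  suffices (E.coord (a, i)).comp (LieAlgebra.ad F W (E (0, 0)))
      = g a • E.coord (a, i) + ((i : F) + 1) • E.coord (a, i + 1) from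
    LinearMap.congr_fun this x
  classical
  refine E.ext fun ⟨b, j⟩ => ?_
  simp only [LinearMap.comp_apply, LieAlgebra.ad_apply, h.lie_basis_zero_zero, LinearMap.add_apply,
    LinearMap.smul_apply, map_add, map_smul, Basis.coord_apply, Basis.repr_self,
    smul_eq_mul, Finsupp.single_apply, Prod.mk.injEq]
  rcases eq_or_ne b a with rfl | hba
  · simp only [true_and]
    rcases j with _ | j <;> split_ifs <;> subst_vars <;> first | (exfalso; omega) | simp
  · simp [hba]

theorem repr_lie_basis_zero_one (h : HasWittBracket g E) (x : W) (i : ℕ) :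
    E.repr ⁅E (0, 1), x⁆ (0, i) = ((i : F) - 1) * E.repr x (0, i) := by
  suffices (E.coord (0, i)).comp (LieAlgebra.ad F W (E (0, 1))) = ((i : F) - 1) • E.coord (0, i)
    from LinearMap.congr_fun this x
  classical
  refine E.ext fun ⟨b, j⟩ => ?_
  simp only [LinearMap.comp_apply, LieAlgebra.ad_apply, h.lie_basis_zero_one,
    LinearMap.smul_apply, map_add, map_smul, Basis.coord_apply, Basis.repr_self,
    smul_eq_mul, Finsupp.single_apply, Prod.mk.injEq]
  rcases eq_or_ne b 0 with rfl | hb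
  · split_ifs <;> simp_all
  · simp [hb]

theorem repr_eq_zero_of_repr_lie_sub_smul_eq_zero (h : HasWittBracket g E)
    (hg : Function.Injective g) {x : W} {a b : Γ} (hab : a ≠ b)
    (hx : ∀ i, E.repr (⁅E (0, 0), x⁆ - g b • x) (a, i) = 0) (i : ℕ) : E.repr x (a, i) = 0 := by
  have hgab : g a - g b ≠ 0 := sub_ne_zero.2 (hg.ne hab)
  have hfin : {k | E.repr x (a, k) ≠ 0}.Finite :=
    Set.Finite.preimage (Prod.mk_right_injective a).injOn (E.repr x).hasFiniteSupport
  have hempty : {k | E.repr x (a, k) ≠ 0} = ∅ := by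
    refine hfin.eq_empty_of_forall_add_one_mem fun k hk hk1 => hk ?_
    have hxk := hx k
    rw [map_sub, map_smul, Finsupp.sub_apply, Finsupp.smul_apply, h.repr_lie_basis_zero_zero,
      hk1, smul_eq_mul] at hxk
    exact (mul_eq_zero.1 (by linear_combination hxk)).resolve_left hgab
  simpa using Set.eq_empty_iff_forall_notMem.1 hempty i

theorem eq_repr_smul_of_lie_eq_smul [CharZero F] (h : HasWittBracket g E)
    (hg : Function.Injective g) {x : W} {b : Γ} (hx : ⁅E (0, 0), x⁆ = g b • x) :
    x = E.repr x (b, 0) • E (b, 0) := by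
  classical
  have hx' : ∀ a i, E.repr (⁅E (0, 0), x⁆ - g b • x) (a, i) = 0 := by simp [hx]
  rw [E.ext_elem_iff]
  rintro ⟨a, i⟩
  rw [map_smul, E.repr_self, Finsupp.smul_apply, Finsupp.single_apply, smul_eq_mul]
  rcases eq_or_ne a b with rfl | hab
  · rcases i with _ | i
    · simp
    · have hxi := hx' a i
      rw [map_sub, map_smul, Finsupp.sub_apply, Finsupp.smul_apply, h.repr_lie_basis_zero_zero,
        smul_eq_mul] at hxi
      have hi : (i : F) + 1 ≠ 0 := by exact_mod_cast i.succ_ne_zero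
      simpa using (mul_eq_zero.1 (by linear_combination hxi)).resolve_left hi
  · simp [h.repr_eq_zero_of_repr_lie_sub_smul_eq_zero hg hab (hx' a), hab.symm]

theorem apply_basis_mk_zero [CharZero F] (h : HasWittBracket g E) (hg : Function.Injective g)
    {D : LieDerivation F W W} (hD : D (E (0, 0)) = 0) (b : Γ) :
    D (E (b, 0)) = E.repr (D (E (b, 0))) (b, 0) • E (b, 0) :=
  h.eq_repr_smul_of_lie_eq_smul hg <| by
    rw [← D.apply_lie_of_apply_eq_zero hD, h.lie_basis_zero_zero]
    simp

theorem apply_basis_mk_add_one (h : HasWittBracket g E) {D : LieDerivation F W W}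
    (hD : D (E (0, 1)) = 0) {a : Γ} (ha : g a ≠ 0) {i : ℕ} {s : F}
    (hs : D (E (a, i)) = s • E (a, i)) : D (E (a, i + 1)) = s • E (a, i + 1) := by
  have key := D.apply_lie_of_apply_eq_zero hD (E (a, i))
  rw [h.lie_basis_zero_one, map_add, map_smul, map_smul, hs, lie_smul,
    h.lie_basis_zero_one] at key
  apply smul_right_injective W ha
  linear_combination (norm := module) key

theorem repr_apply_basis_zero_mk_eq_zero (h : HasWittBracket g E) (hg : Function.Injective g)
    {D : LieDerivation F W W} (hD : D (E (0, 0)) = 0) {a : Γ} (ha : a ≠ 0) (j i : ℕ) :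
    E.repr (D (E (0, j))) (a, i) = 0 := by
  induction j generalizing i with
  | zero => simp [hD]
  | succ j ih =>
    refine h.repr_eq_zero_of_repr_lie_sub_smul_eq_zero hg (b := 0) ha (fun k => ?_) i
    rw [← D.apply_lie_of_apply_eq_zero hD, h.lie_basis_zero_zero]
    simp [ih]

theorem apply_basis_zero_mk [CharZero F] (h : HasWittBracket g E) (hg : Function.Injective g)
    {D : LieDerivation F W W} (h0 : D (E (0, 0)) = 0) (h1 : D (E (0, 1)) = 0) (j : ℕ) :
    D (E (0, j)) = E.repr (D (E (0, j))) (0, j) • E (0, j) := by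
  classical
  have key := D.apply_lie_of_apply_eq_zero h1 (E (0, j))
  rw [h.lie_basis_zero_one, map_zero, zero_smul, zero_add, map_smul] at key
  rw [E.ext_elem_iff]
  rintro ⟨a, i⟩
  rw [map_smul, E.repr_self, Finsupp.smul_apply, Finsupp.single_apply, smul_eq_mul]
  rcases eq_or_ne a 0 with rfl | ha
  · have hi := congrArg (fun y => E.repr y (0, i)) key
    simp only [map_smul, Finsupp.smul_apply, smul_eq_mul, h.repr_lie_basis_zero_one] at hi
    split_ifs with hji
    · obtain rfl := (Prod.mk.inj hji).2
      rw [mul_one]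
    · have hji' : (j : F) - i ≠ 0 := sub_ne_zero.2 (by simpa using hji)
      simpa using (mul_eq_zero.1 (by linear_combination hi)).resolve_left hji'
  · simp [h.repr_apply_basis_zero_mk_eq_zero hg h0 ha, ha.symm]

theorem exists_apply_basis_eq_smul [CharZero F] (h : HasWittBracket g E)
    (hg : Function.Injective g) {D : LieDerivation F W W} (h0 : D (E (0, 0)) = 0)
    (h1 : D (E (0, 1)) = 0) (a : Γ) (i : ℕ) : ∃ s : F, D (E (a, i)) = s • E (a, i) := by
  rcases eq_or_ne a 0 with rfl | ha
  · exact ⟨_, h.apply_basis_zero_mk hg h0 h1 i⟩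
  have hga : g a ≠ 0 := by simpa using hg.ne ha
  induction i with
  | zero => exact ⟨_, h.apply_basis_mk_zero hg h0 a⟩
  | succ i ih =>
    obtain ⟨s, hs⟩ := ih
    exact ⟨s, h.apply_basis_mk_add_one h1 hga hs⟩

end HasWittBracket

end

theorem derivation_killing_del (F : Type*) [Field F] [CharZero F] (g : ℤ →+ F)
    (hg : Function.Injective g)
    (W : Type*) [LieRing W] [LieAlgebra F W] (E : Module.Basis (ℤ × ℕ) F W)
    (hbr : ∀ (a : ℤ) (i : ℕ) (b : ℤ) (j : ℕ), ⁅E (a, i), E (b, j)⁆ =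
      (g b - g a) • E (a + b, i + j) + (((j : ℤ) - (i : ℤ)) : F) • E (a + b, i + j - 1))
    (D : LieDerivation F W W) (hD : D (E (0, 0)) = 0) :
    ∃ (f : F) (S : LieDerivation F W W),
      (∀ (a : ℤ) (i : ℕ), ∃ s : F, S (E (a, i)) = s • E (a, i)) ∧
      ∀ x : W, D x = f • ⁅E (0, 0), x⁆ + S x := by
  have h : HasWittBracket g E := hbr
  set f := E.repr (D (E (0, 1))) (0, 0)
  have hD1 : D (E (0, 1)) = f • E (0, 0) := h.eq_repr_smul_of_lie_eq_smul hg <| by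
    rw [← D.apply_lie_of_apply_eq_zero hD, h.lie_basis_zero_zero]
    simp [hD]
  set S := D - f • LieDerivation.ad F W (E (0, 0))
  have hS0 : S (E (0, 0)) = 0 := by simp [S, hD]
  have hS1 : S (E (0, 1)) = 0 := by simp [S, hD1, h.lie_basis_zero_zero]
  refine ⟨f, S, h.exists_apply_basis_eq_smul hg hS0 hS1, fun x => ?_⟩
  simp [S]
end

section
/- For any nonzero element l of W(g,1) with g injective, the ideal generated by l contains a nonzero element all of whose lower indices (appearing with nonzero coefficient in the basis expansion) are positive. -/
/-!
Let the lower indices occurring in `l` range over `[n, N]`, with `⟨a, N⟩` occurring. Bracketing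
with `⟨a + 1, 2 - n⟩` raises every lower index by at least `1 - n`, so all lower indices of the
result are positive, while its coefficient at `⟨2a + 1, N + 2 - n⟩` is `g a - g (a + 1)` times
that of `⟨a, N⟩` in `l`, since nothing else can reach that position; this is nonzero because `g`
is injective.
-/

section

variable {F W : Type*} [Field F] [LieRing W] [LieAlgebra F W]

def IsWittTypeBasis (g : ℤ →+ F) (E : Module.Basis (ℤ × ℤ) F W) : Prop :=
  ∀ a i b j : ℤ, ⁅E (a, i), E (b, j)⁆ =
    (g b - g a) • E (a + b, i + j) + ((j - i : ℤ) : F) • E (a + b, i + j - 1)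

namespace IsWittTypeBasis

variable {g : ℤ →+ F} {E : Module.Basis (ℤ × ℤ) F W}

theorem repr_lie_apply (hbr : IsWittTypeBasis g E) (b j : ℤ) (x : W) (a i : ℤ) :
    E.repr ⁅E (b, j), x⁆ (b + a, j + i) =
      E.repr x (a, i) * (g a - g b) + E.repr x (a, i + 1) * ((i + 1 - j : ℤ) : F) := by
  classical
  suffices h : (Finsupp.lapply (b + a, j + i)).comp
      (E.repr.toLinearMap ∘ₗ LieModule.toEnd F W W (E (b, j))) =
        (g a - g b) • (Finsupp.lapply (a, i)).comp E.repr.toLinearMap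
        + ((i + 1 - j : ℤ) : F) • (Finsupp.lapply (a, i + 1)).comp E.repr.toLinearMap by
    simpa [mul_comm] using LinearMap.congr_fun h x
  refine E.ext fun ⟨a', i'⟩ => ?_
  simp only [LinearMap.comp_apply, LinearMap.add_apply, LinearMap.smul_apply,
    LieModule.toEnd_apply_apply, hbr b j a' i', LinearEquiv.coe_coe, map_add, map_smul,
    Module.Basis.repr_self, Finsupp.lapply_apply, Finsupp.single_apply, Prod.ext_iff, smul_eq_mul]
  split_ifs <;> (try omega) <;> simp_all

theorem le_snd_of_mem_support_repr_lie (hbr : IsWittTypeBasis g E) {x : W} {n : ℤ}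
    (hx : ∀ q ∈ (E.repr x).support, n ≤ q.2) (b j : ℤ) :
    ∀ p ∈ (E.repr ⁅E (b, j), x⁆).support, j + n - 1 ≤ p.2 := by
  rintro ⟨c, k⟩ hp
  by_contra hk
  have hvanish : ∀ i, i < n → E.repr x (c - b, i) = 0 := fun i hi =>
    Finsupp.notMem_support_iff.mp fun h => (hx _ h).not_gt hi
  refine Finsupp.mem_support_iff.mp hp ?_
  rw [show (c, k) = (b + (c - b), j + (k - j)) by simp, hbr.repr_lie_apply,
    hvanish _ (by omega), hvanish _ (by omega), zero_mul, zero_mul, add_zero]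

theorem repr_lie_apply_of_forall_snd_le (hbr : IsWittTypeBasis g E) {x : W} {p : ℤ × ℤ}
    (hp : ∀ q ∈ (E.repr x).support, q.2 ≤ p.2) (b j : ℤ) :
    E.repr ⁅E (b, j), x⁆ (b + p.1, j + p.2) = E.repr x p * (g p.1 - g b) := by
  have hvanish : E.repr x (p.1, p.2 + 1) = 0 :=
    Finsupp.notMem_support_iff.mp fun h => (hp _ h).not_gt (Int.lt_succ p.2)
  rw [hbr.repr_lie_apply, hvanish, zero_mul, add_zero]

end IsWittTypeBasis

end

theorem ideal_contains_positive_lower_indices_general (F : Type*) [Field F]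
    (g : ℤ →+ F) (hg : Function.Injective g)
    (W : Type*) [LieRing W] [LieAlgebra F W] (E : Module.Basis (ℤ × ℤ) F W)
    (hbr : ∀ a i b j : ℤ, ⁅E (a, i), E (b, j)⁆ =
      (g b - g a) • E (a + b, i + j) + ((j - i : ℤ) : F) • E (a + b, i + j - 1))
    (l : W) (hl : l ≠ 0) :
    ∃ m ∈ LieSubmodule.lieSpan F W ({l} : Set W), m ≠ 0 ∧
      ∀ p ∈ (E.repr m).support, 0 < p.2 := by
  have hsupp : (E.repr l).support.Nonempty :=
    Finsupp.support_nonempty_iff.mpr (E.repr.map_ne_zero_iff.mpr hl)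
  obtain ⟨p, hp, hmax⟩ := (E.repr l).support.exists_max_image Prod.snd hsupp
  obtain ⟨q, -, hmin⟩ := (E.repr l).support.exists_min_image Prod.snd hsupp
  refine ⟨⁅E (p.1 + 1, 2 - q.2), l⁆,
    LieSubmodule.lie_mem _ (LieSubmodule.subset_lieSpan rfl), fun h => ?_, fun r hr => ?_⟩
  · have htop := IsWittTypeBasis.repr_lie_apply_of_forall_snd_le hbr hmax (p.1 + 1) (2 - q.2)
    rw [h, map_zero, Finsupp.coe_zero, Pi.zero_apply] at htop
    exact mul_ne_zero (Finsupp.mem_support_iff.mp hp)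
      (sub_ne_zero.mpr (hg.ne (by omega))) htop.symm
  · have := IsWittTypeBasis.le_snd_of_mem_support_repr_lie hbr hmin (p.1 + 1) (2 - q.2) r hr
    omega

theorem ideal_contains_positive_lower_indices (F : Type*) [Field F] [CharZero F]
    (g : ℤ →+ F) (hg : Function.Injective g)
    (W : Type*) [LieRing W] [LieAlgebra F W] (E : Module.Basis (ℤ × ℤ) F W)
    (hbr : ∀ a i b j : ℤ, ⁅E (a, i), E (b, j)⁆ =
      (g b - g a) • E (a + b, i + j) + ((j - i : ℤ) : F) • E (a + b, i + j - 1))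
    (l : W) (hl : l ≠ 0) :
    ∃ m ∈ LieSubmodule.lieSpan F W ({l} : Set W), m ≠ 0 ∧
      ∀ p ∈ (E.repr m).support, 0 < p.2 :=
  ideal_contains_positive_lower_indices_general F g hg W E hbr l hl
end
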